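/- For n ≥ 4, exactly 2 matrices in PSC_n^{0,0} have exponent 2(n−2), the maximum possible. -/

import Mathlib

def IsPrimitive {n : ℕ} (A : Matrix (Fin n) (Fin n) ℝ) : Prop :=
  (∀ i j, 0 ≤ A i j) ∧ ∃ k : ℕ, 0 < k ∧ ∀ i j, 0 < (A ^ k) i j

def ExpIs {n : ℕ} (A : Matrix (Fin n) (Fin n) ℝ) (e : ℕ) : Prop :=
  IsLeast {k : ℕ | 0 < k ∧ ∀ i j, 0 < (A ^ k) i j} e

/-- A `(0,1)` companion matrix: superdiagonal entries `1` and all other entries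
`0` in the first `n-1` rows; last-row entries in `{0,1}`. -/
def IsCompanion {n : ℕ} (C : Matrix (Fin n) (Fin n) ℝ) : Prop :=
  ∀ i j : Fin n,
    if (i : ℕ) + 1 < n then (C i j = if (j : ℕ) = (i : ℕ) + 1 then 1 else 0)
    else (C i j = 0 ∨ C i j = 1)

/-- The set `C_n^{α,ε}` of symmetric companion matrices `C + Cᵀ` with
`c_{n,1} = α` and `c_{n,n} = ε`. -/
def companionClass (n : ℕ) (hn : 0 < n) (α ε : ℝ) :
    Set (Matrix (Fin n) (Fin n) ℝ) :=
  {A | ∃ C : Matrix (Fin n) (Fin n) ℝ, IsCompanion C ∧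
    C ⟨n - 1, by omega⟩ ⟨0, hn⟩ = α ∧ C ⟨n - 1, by omega⟩ ⟨n - 1, by omega⟩ = ε ∧
    A = C + C.transpose}

/-- `mRun S` : the maximum length of a run of consecutive integers contained in
`S` (`0` for the empty set). -/
noncomputable def mRun (S : Set ℕ) : ℕ := sSup {L : ℕ | ∃ a : ℕ, ∀ t, t < L → a + t ∈ S}

/-- The exponent set of a family of matrices. -/
def expSet {n : ℕ} (X : Set (Matrix (Fin n) (Fin n) ℝ)) : Set ℕ :=
  {e | ∃ A ∈ X, IsPrimitive A ∧ ExpIs A e}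


/-!
The support graph of `C + Cᵀ` is the path `0 - 1 - ⋯ - (n-1)` with chords `{j, n-1}` for the
marked entries `j` of the last row of `C`, and `(A ^ k) i j > 0` iff that graph has a walk of length
`k` from `i` to `j`. A chord `j ≤ n-5` closing an odd cycle gives walks of length `2n-6` between all
pairs, and so does length `2n-5` for the triangle chord `n-3` together with a further chord; if no
chord closes an odd cycle the graph is bipartite and `A` is not primitive. This leaves the
lollipop, where walks along the path and through the triangle, padded by back-and-forth steps,
join all pairs in length `2n-4`. Conversely the shortest walk of each parity from a vertex to `0`
changes by at most one per step, which rules out odd lengths below `2n-3` from `0` to `0` and even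
lengths below `2n-4` from `1` to `0`. The lollipop support is realised by exactly two matrices,
with `a_{n,n-1} ∈ {1, 2}`.
-/

namespace SimpleGraph

variable {V : Type*} {G H : SimpleGraph V} {u v w : V} {k l : ℕ}

def HasWalkLength (G : SimpleGraph V) (u v : V) (k : ℕ) : Prop :=
  ∃ p : G.Walk u v, p.length = k

def fullWalkLengths (G : SimpleGraph V) : Set ℕ :=
  {k | 0 < k ∧ ∀ u v, G.HasWalkLength u v k}

theorem hasWalkLength_zero_iff : G.HasWalkLength u v 0 ↔ u = v :=
  ⟨fun ⟨_, hp⟩ => Walk.eq_of_length_eq_zero hp, fun h => h ▸ ⟨.nil, rfl⟩⟩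

theorem hasWalkLength_succ_iff :
    G.HasWalkLength u v (k + 1) ↔ ∃ w, G.Adj u w ∧ G.HasWalkLength w v k := by
  constructor
  · rintro ⟨_ | ⟨h, q⟩, hp⟩
    · simp at hp
    · exact ⟨_, h, q, by simpa using hp⟩
  · rintro ⟨w, h, q, rfl⟩
    exact ⟨.cons h q, rfl⟩

theorem Adj.hasWalkLength_one (h : G.Adj u v) : G.HasWalkLength u v 1 :=
  ⟨h.toWalk, rfl⟩

namespace HasWalkLength

theorem trans (h₁ : G.HasWalkLength u v k) (h₂ : G.HasWalkLength v w l) :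
    G.HasWalkLength u w (k + l) := by
  obtain ⟨p, rfl⟩ := h₁
  obtain ⟨q, rfl⟩ := h₂
  exact ⟨p.append q, p.length_append q⟩

theorem symm (h : G.HasWalkLength u v k) : G.HasWalkLength v u k := by
  obtain ⟨p, rfl⟩ := h
  exact ⟨p.reverse, p.length_reverse⟩

theorem mono (hGH : G ≤ H) (h : G.HasWalkLength u v k) : H.HasWalkLength u v k := by
  obtain ⟨p, rfl⟩ := h
  exact ⟨p.mapLe hGH, p.length_mapLe hGH⟩

theorem add_two (h : G.HasWalkLength u v k) (hv : G.Adj v w) : G.HasWalkLength u v (k + 2) :=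
  h.trans (hv.hasWalkLength_one.trans hv.symm.hasWalkLength_one)

theorem of_le (hdeg : ∀ v, ∃ w, G.Adj v w) (h : G.HasWalkLength u v l) (hlk : l ≤ k)
    (hpar : l % 2 = k % 2) : G.HasWalkLength u v k := by
  obtain ⟨t, rfl⟩ : ∃ t, k = l + 2 * t := ⟨(k - l) / 2, by omega⟩
  clear hlk hpar
  induction t with
  | zero => exact h
  | succ t ih => exact (hdeg v).elim fun w hw => ih.add_two hw

end HasWalkLength

section Fin

variable {n : ℕ}

theorem HasWalkLength.add_mod_two {G : SimpleGraph (Fin n)}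
    (hG : ∀ u v, G.Adj u v → ((u : ℕ) + v) % 2 = 1) {u v : Fin n}
    (h : G.HasWalkLength u v k) : (k + u + v) % 2 = 0 := by
  induction k generalizing u with
  | zero => rw [hasWalkLength_zero_iff.1 h]; omega
  | succ k ih =>
    obtain ⟨w, huw, hwv⟩ := hasWalkLength_succ_iff.1 h
    have := hG u w huw
    have := ih hwv
    omega

theorem fullWalkLengths_eq_empty_of_adj_odd (hn : 2 ≤ n) {G : SimpleGraph (Fin n)}
    (hG : ∀ u v, G.Adj u v → ((u : ℕ) + v) % 2 = 1) : G.fullWalkLengths = ∅ := by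
  refine Set.eq_empty_of_forall_notMem fun k ⟨_, hk⟩ => ?_
  obtain ⟨a, b, ha, hb⟩ : ∃ a b : Fin n, (a : ℕ) = 0 ∧ (b : ℕ) = 1 :=
    ⟨⟨0, by omega⟩, ⟨1, by omega⟩, rfl, rfl⟩
  have h₁ := (hk a a).add_mod_two hG
  have h₂ := (hk a b).add_mod_two hG
  omega

theorem pathGraph_hasWalkLength_dist (u v : Fin n) :
    (pathGraph n).HasWalkLength u v (Nat.dist u v) := by
  suffices h : ∀ d (u v : Fin n), (u : ℕ) + d = v → (pathGraph n).HasWalkLength u v d by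
    rcases le_total (u : ℕ) v with huv | huv
    · exact h _ u v (by unfold Nat.dist; omega)
    · exact (h _ v u (by unfold Nat.dist; omega)).symm
  intro d
  induction d with
  | zero => exact fun u v h => hasWalkLength_zero_iff.2 (Fin.ext h)
  | succ d ih =>
    intro u v h
    have hu : (u : ℕ) + 1 < n := by omega
    exact hasWalkLength_succ_iff.2
      ⟨⟨u + 1, hu⟩, pathGraph_adj.2 (Or.inl rfl), ih _ _ (by simp only; omega)⟩

theorem pathGraph_exists_adj (hn : 2 ≤ n) (u : Fin n) : ∃ v, (pathGraph n).Adj u v := by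
  by_cases hu : (u : ℕ) + 1 < n
  · exact ⟨⟨u + 1, hu⟩, pathGraph_adj.2 (Or.inl rfl)⟩
  · exact ⟨⟨u - 1, by omega⟩, pathGraph_adj.2 (Or.inr (by simp only; omega))⟩

theorem hasWalkLength_via_adj {G : SimpleGraph (Fin n)} (hG : pathGraph n ≤ G) {a b : Fin n}
    (hab : G.Adj a b) (u v : Fin n) :
    G.HasWalkLength u v (Nat.dist u a + 1 + Nat.dist b v) :=
  (((pathGraph_hasWalkLength_dist u a).mono hG).trans hab.hasWalkLength_one).trans
    ((pathGraph_hasWalkLength_dist b v).mono hG)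

end Fin

end SimpleGraph

open SimpleGraph

theorem Matrix.pow_apply_pos_iff_hasWalkLength {V R : Type*} [Fintype V] [DecidableEq V]
    [Semiring R] [LinearOrder R] [IsStrictOrderedRing R] {A : Matrix V V R} {G : SimpleGraph V}
    (hA : ∀ i j, 0 ≤ A i j) (hG : ∀ i j, 0 < A i j ↔ G.Adj i j) (k : ℕ) (i j : V) :
    0 < (A ^ k) i j ↔ G.HasWalkLength i j k := by
  induction k generalizing i with
  | zero =>
    rw [pow_zero, Matrix.one_apply, hasWalkLength_zero_iff]
    split_ifs with h <;> simp [h]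
  | succ k ih =>
    rw [pow_succ', Matrix.mul_apply, hasWalkLength_succ_iff, Finset.sum_pos_iff_of_nonneg
      fun w _ => mul_nonneg (hA i w) (Matrix.pow_apply_nonneg hA k w j)]
    refine exists_congr fun w => ?_
    simp only [Finset.mem_univ, true_and]
    rw [← hG, ← ih]
    exact ⟨fun h => ⟨pos_of_mul_pos_left h (Matrix.pow_apply_nonneg hA k w j),
      pos_of_mul_pos_right h (hA i w)⟩, fun h => mul_pos h.1 h.2⟩

theorem Matrix.setOf_pow_pos_eq_fullWalkLengths {V R : Type*} [Fintype V] [DecidableEq V]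
    [Semiring R] [LinearOrder R] [IsStrictOrderedRing R] {A : Matrix V V R} {G : SimpleGraph V}
    (hA : ∀ i j, 0 ≤ A i j) (hG : ∀ i j, 0 < A i j ↔ G.Adj i j) :
    {k | 0 < k ∧ ∀ i j, 0 < (A ^ k) i j} = G.fullWalkLengths := by
  simp only [fullWalkLengths, Matrix.pow_apply_pos_iff_hasWalkLength hA hG]

section ChordedPath

variable {n : ℕ} {S : Set (Fin n)}

def chordedPath (n : ℕ) (S : Set (Fin n)) : SimpleGraph (Fin n) :=
  fromRel fun i j => (i : ℕ) + 1 = j ∨ (i ∈ S ∧ (j : ℕ) + 1 = n)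

theorem chordedPath_adj {i j : Fin n} :
    (chordedPath n S).Adj i j ↔ i ≠ j ∧ ((i : ℕ) + 1 = j ∨ (i ∈ S ∧ (j : ℕ) + 1 = n) ∨
      (j : ℕ) + 1 = i ∨ (j ∈ S ∧ (i : ℕ) + 1 = n)) := by
  simp only [chordedPath, fromRel_adj, or_assoc]

theorem pathGraph_le_chordedPath : pathGraph n ≤ chordedPath n S := fun i j h => by
  rw [pathGraph_adj] at h
  exact chordedPath_adj.2 ⟨fun hij => by subst hij; omega, by tauto⟩

theorem chordedPath_adj_of_mem {j l : Fin n} (hj : j ∈ S) (hjn : (j : ℕ) + 1 < n)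
    (hl : (l : ℕ) + 1 = n) : (chordedPath n S).Adj j l :=
  chordedPath_adj.2 ⟨fun h => by subst h; omega, Or.inr (Or.inl ⟨hj, hl⟩)⟩

theorem chordedPath_exists_adj (hn : 2 ≤ n) (u : Fin n) : ∃ v, (chordedPath n S).Adj u v :=
  (pathGraph_exists_adj hn u).imp fun _ h => pathGraph_le_chordedPath h

theorem Fin.exists_val_add_one_eq (hn : 0 < n) : ∃ l : Fin n, (l : ℕ) + 1 = n :=
  ⟨⟨n - 1, by omega⟩, by simp only; omega⟩

/-- As `n + j` is odd, the chord `{j, n-1}` closes the odd cycle `j, j+1, …, n-1`. -/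
theorem mem_fullWalkLengths_of_oddChord (hn : 2 ≤ n) {j : Fin n} (hj : j ∈ S)
    (hjn : (j : ℕ) + 1 < n) (hpar : (n + j) % 2 = 1) {K : ℕ} (hK : K % 2 = 0)
    (hjK : (j : ℕ) + n ≤ K + 1) : K ∈ (chordedPath n S).fullWalkLengths := by
  obtain ⟨l, hl⟩ := Fin.exists_val_add_one_eq (n := n) (by omega)
  have hdeg := chordedPath_exists_adj (S := S) hn
  have hchord := chordedPath_adj_of_mem hj hjn hl
  refine ⟨by omega, fun u v => ?_⟩
  wlog huv : (u : ℕ) ≤ v generalizing u v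
  · exact (this v u (by omega)).symm
  rcases Nat.mod_two_eq_zero_or_one (u + v) with huv₂ | huv₂
  · exact ((pathGraph_hasWalkLength_dist u v).mono pathGraph_le_chordedPath).of_le hdeg
      (by unfold Nat.dist; omega) (by unfold Nat.dist; omega)
  · exact (hasWalkLength_via_adj pathGraph_le_chordedPath hchord u v).of_le hdeg
      (by unfold Nat.dist; omega) (by unfold Nat.dist; omega)

theorem twoMul_sub_five_mem_fullWalkLengths {t j : Fin n} (ht : t ∈ S)
    (htn : (t : ℕ) + 3 = n) (hj : j ∈ S) (hjn : (j : ℕ) + 4 ≤ n)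
    (hpar : (n + j) % 2 = 0) : 2 * n - 5 ∈ (chordedPath n S).fullWalkLengths := by
  obtain ⟨l, hl⟩ := Fin.exists_val_add_one_eq (n := n) (by omega)
  have hdeg := chordedPath_exists_adj (S := S) (by omega)
  have htl := chordedPath_adj_of_mem ht (by omega) hl
  have hjl := chordedPath_adj_of_mem hj (by omega) hl
  refine ⟨by omega, fun u v => ?_⟩
  wlog huv : (u : ℕ) ≤ v generalizing u v
  · exact (this v u (by omega)).symm
  rcases Nat.mod_two_eq_zero_or_one (u + v) with huv₂ | huv₂
  · by_cases h2 : 2 ≤ (u : ℕ) + v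
    · exact (hasWalkLength_via_adj pathGraph_le_chordedPath htl u v).of_le hdeg
        (by unfold Nat.dist; omega) (by unfold Nat.dist; omega)
    · -- here `u = v = 0`: go round the odd cycle `t, n-1, j, j+1, …, t`
      have h := ((hasWalkLength_via_adj pathGraph_le_chordedPath htl u l).trans
        (hasWalkLength_via_adj pathGraph_le_chordedPath hjl.symm l v))
      exact h.of_le hdeg (by unfold Nat.dist; omega) (by unfold Nat.dist; omega)
  · exact ((pathGraph_hasWalkLength_dist u v).mono pathGraph_le_chordedPath).of_le hdeg
      (by unfold Nat.dist; omega) (by unfold Nat.dist; omega)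

/-- Chords from `n-2` and `n-1` are left free: they are a path edge and a loop. -/
def IsLollipopChordSet (n : ℕ) (S : Set (Fin n)) : Prop :=
  ∀ j : Fin n, (j : ℕ) + 2 < n → (j ∈ S ↔ (j : ℕ) + 3 = n)

theorem IsLollipopChordSet.adj_of_adj (hS : IsLollipopChordSet n S) {u w : Fin n}
    (h : (chordedPath n S).Adj u w) :
    (u : ℕ) + 1 = w ∨ (w : ℕ) + 1 = u ∨ ((u : ℕ) + 3 = n ∧ (w : ℕ) + 1 = n) ∨
      ((u : ℕ) + 1 = n ∧ (w : ℕ) + 3 = n) := by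
  obtain ⟨hne, h⟩ := chordedPath_adj.1 h
  have hne' : (u : ℕ) ≠ w := Fin.val_ne_of_ne hne
  have := u.isLt; have := w.isLt
  rcases h with h | ⟨hu, hw⟩ | h | ⟨hw, hu⟩
  · exact Or.inl h
  · by_cases h2 : (u : ℕ) + 2 < n
    · have := (hS u h2).1 hu; omega
    · omega
  · omega
  · by_cases h2 : (w : ℕ) + 2 < n
    · have := (hS w h2).1 hw; omega
    · omega

/-- Length of a shortest walk from `v` to `0` of parity `p` in the lollipop graph. -/
def lollipopParityDist (n v p : ℕ) : ℕ :=
  if v + 3 ≤ n then (if (v + p) % 2 = 0 then v else 2 * n - 3 - v)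
  else if v + 2 = n then (if (v + p) % 2 = 0 then v else n - 1)
  else (if (n + p) % 2 = 0 then n - 2 else n - 1)

theorem IsLollipopChordSet.lollipopParityDist_le (hS : IsLollipopChordSet n S) (hn : 4 ≤ n)
    {v o : Fin n} (ho : (o : ℕ) = 0) (h : (chordedPath n S).HasWalkLength v o k) :
    lollipopParityDist n v (k % 2) ≤ k := by
  induction k generalizing v with
  | zero => rw [hasWalkLength_zero_iff.1 h, ho]; simp [lollipopParityDist]; omega
  | succ k ih =>
    obtain ⟨w, hvw, hw⟩ := hasWalkLength_succ_iff.1 h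
    have := ih hw
    have := hS.adj_of_adj hvw
    have := v.isLt; have := w.isLt
    unfold lollipopParityDist at *
    split_ifs at * <;> omega

theorem IsLollipopChordSet.le_of_mem_fullWalkLengths (hS : IsLollipopChordSet n S) (hn : 4 ≤ n)
    {k : ℕ} (hk : k ∈ (chordedPath n S).fullWalkLengths) : 2 * n - 4 ≤ k := by
  obtain ⟨o, a, ho, ha⟩ : ∃ o a : Fin n, (o : ℕ) = 0 ∧ (a : ℕ) = 1 :=
    ⟨⟨0, by omega⟩, ⟨1, by omega⟩, rfl, rfl⟩
  have h₀ := hS.lollipopParityDist_le hn ho (hk.2 o o)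
  have h₁ := hS.lollipopParityDist_le hn ho (hk.2 a o)
  rw [ho] at h₀
  rw [ha] at h₁
  unfold lollipopParityDist at h₀ h₁
  split_ifs at h₀ h₁ <;> omega

theorem IsLollipopChordSet.isLeast_fullWalkLengths (hS : IsLollipopChordSet n S) (hn : 4 ≤ n) :
    IsLeast (chordedPath n S).fullWalkLengths (2 * (n - 2)) := by
  have ht : (⟨n - 3, by omega⟩ : Fin n) ∈ S := (hS _ (by simp only; omega)).2 (by simp only; omega)
  refine ⟨mem_fullWalkLengths_of_oddChord (by omega) ht (by simp only; omega)
    (by simp only; omega) (by omega) (by simp only; omega), fun k hk => ?_⟩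
  have := hS.le_of_mem_fullWalkLengths hn hk
  omega

theorem isLollipopChordSet_of_isLeast_fullWalkLengths (hn : 4 ≤ n) (hS0 : ∀ j ∈ S, (j : ℕ) ≠ 0)
    (h : IsLeast (chordedPath n S).fullWalkLengths (2 * (n - 2))) : IsLollipopChordSet n S := by
  have hmin : ∀ k ∈ (chordedPath n S).fullWalkLengths, 2 * n - 4 ≤ k :=
    fun k hk => by have := h.2 hk; omega
  have heven : ∀ j ∈ S, (j : ℕ) + 5 ≤ n → (n + j) % 2 = 0 := by
    intro j hj hjn
    by_contra hpar
    have := hmin _ (mem_fullWalkLengths_of_oddChord (K := 2 * n - 6) (by omega) hj (by omega)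
      (by omega) (by omega) (by have := hS0 j hj; omega))
    omega
  by_cases ht : ∃ t ∈ S, (t : ℕ) + 3 = n
  · obtain ⟨t, ht, htn⟩ := ht
    refine fun j hj => ⟨fun hjS => by_contra fun hjt => ?_,
      fun hjt => by rwa [show j = t from Fin.ext (by omega)]⟩
    have hjpar : (n + j) % 2 = 0 := by
      by_cases hj5 : (j : ℕ) + 5 ≤ n
      · exact heven j hjS hj5
      · omega
    have := hmin _ (twoMul_sub_five_mem_fullWalkLengths ht htn hjS (by omega) hjpar)
    omega
  · -- no chord closes an odd cycle, so the graph is bipartite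
    have hchord : ∀ j ∈ S, (j : ℕ) + 1 ≠ n → ((j : ℕ) + (n - 1)) % 2 = 1 := by
      intro j hj hjn
      have := hS0 j hj; have := j.isLt
      have : (j : ℕ) + 3 ≠ n := fun h3 => ht ⟨j, hj, h3⟩
      by_cases h5 : (j : ℕ) + 5 ≤ n
      · have := heven j hj h5; omega
      · omega
    have hbip : ∀ u v, (chordedPath n S).Adj u v → ((u : ℕ) + v) % 2 = 1 := by
      intro u v huv
      obtain ⟨hne, h⟩ := chordedPath_adj.1 huv
      have hne' : (u : ℕ) ≠ v := Fin.val_ne_of_ne hne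
      rcases h with h | ⟨hu, hv⟩ | h | ⟨hv, hu⟩
      · omega
      · have := hchord u hu (by omega); omega
      · omega
      · have := hchord v hv (by omega); omega
    simpa [fullWalkLengths_eq_empty_of_adj_odd (by omega) hbip] using h.1

end ChordedPath

section Companion

variable {n : ℕ}

def companionOfRow (r : Fin n → ℝ) : Matrix (Fin n) (Fin n) ℝ :=
  Matrix.of fun i j => if (i : ℕ) + 1 < n then (if (j : ℕ) = (i : ℕ) + 1 then 1 else 0) else r j

def symmCompanion (r : Fin n → ℝ) : Matrix (Fin n) (Fin n) ℝ :=
  companionOfRow r + (companionOfRow r).transpose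

theorem companionOfRow_apply_of_last (r : Fin n → ℝ) {l : Fin n} (hl : (l : ℕ) + 1 = n)
    (j : Fin n) : companionOfRow r l j = r j := by
  simp [companionOfRow, hl]

theorem isCompanion_companionOfRow {r : Fin n → ℝ} (hr : ∀ j, r j = 0 ∨ r j = 1) :
    IsCompanion (companionOfRow r) := fun i j => by
  by_cases hi : (i : ℕ) + 1 < n
  · simp [companionOfRow, hi]
  · simpa [companionOfRow, hi] using hr j

theorem IsCompanion.eq_companionOfRow {C : Matrix (Fin n) (Fin n) ℝ} (hC : IsCompanion C)
    {l : Fin n} (hl : (l : ℕ) + 1 = n) : C = companionOfRow (C l) := by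
  ext i j
  have h := hC i j
  by_cases hi : (i : ℕ) + 1 < n
  · simp_all [companionOfRow]
  · rw [show i = l from Fin.ext (by omega), companionOfRow_apply_of_last _ hl]

theorem IsCompanion.lastRow {C : Matrix (Fin n) (Fin n) ℝ} (hC : IsCompanion C) {l : Fin n}
    (hl : (l : ℕ) + 1 = n) (j : Fin n) : C l j = 0 ∨ C l j = 1 := by
  simpa [hl] using hC l j

theorem mem_companionClass_iff (hn : 0 < n) (α ε : ℝ) {A : Matrix (Fin n) (Fin n) ℝ} :
    A ∈ companionClass n hn α ε ↔ ∃ r : Fin n → ℝ, (∀ j, r j = 0 ∨ r j = 1) ∧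
      (∀ j : Fin n, (j : ℕ) = 0 → r j = α) ∧ (∀ l : Fin n, (l : ℕ) + 1 = n → r l = ε) ∧
      A = symmCompanion r := by
  have hl : ((⟨n - 1, by omega⟩ : Fin n) : ℕ) + 1 = n := by simp only; omega
  constructor
  · rintro ⟨C, hC, hα, hε, rfl⟩
    refine ⟨C ⟨n - 1, by omega⟩, hC.lastRow hl, fun j hj => ?_, fun l hl' => ?_, ?_⟩
    · rwa [show j = ⟨0, hn⟩ from Fin.ext hj]
    · rwa [show l = ⟨n - 1, by omega⟩ from Fin.ext (by simp only; omega)]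
    · rw [symmCompanion, ← hC.eq_companionOfRow hl]
  · rintro ⟨r, hr, hα, hε, rfl⟩
    refine ⟨companionOfRow r, isCompanion_companionOfRow hr, ?_, ?_, rfl⟩ <;>
      rw [companionOfRow_apply_of_last r hl]
    exacts [hα _ rfl, hε _ hl]

theorem symmCompanion_injective : Function.Injective (symmCompanion (n := n)) := by
  intro r r' h
  funext j
  obtain ⟨l, hl⟩ := Fin.exists_val_add_one_eq (n := n) (by have := j.isLt; omega)
  have := congrFun (congrFun h l) j
  simp only [symmCompanion, companionOfRow, Matrix.add_apply, Matrix.transpose_apply,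
    Matrix.of_apply, hl] at this
  by_cases hj : (j : ℕ) + 1 < n
  · simpa [hj] using this
  · rw [show j = l from Fin.ext (by omega)] at this ⊢
    simp only [hl, lt_irrefl, if_false] at this
    linarith

theorem symmCompanion_nonneg {r : Fin n → ℝ} (hr : ∀ j, r j = 0 ∨ r j = 1) (i j : Fin n) :
    0 ≤ symmCompanion r i j := by
  have hr' : ∀ j, 0 ≤ r j := fun j => by rcases hr j with h | h <;> simp [h]
  have := hr' i; have := hr' j
  simp only [symmCompanion, companionOfRow, Matrix.add_apply, Matrix.transpose_apply,
    Matrix.of_apply]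
  split_ifs <;> linarith

theorem symmCompanion_pos_iff {r : Fin n → ℝ} (hr : ∀ j, r j = 0 ∨ r j = 1)
    (hlast : ∀ l : Fin n, (l : ℕ) + 1 = n → r l = 0) (i j : Fin n) :
    0 < symmCompanion r i j ↔ (chordedPath n {j | r j = 1}).Adj i j := by
  have hi := i.isLt; have hj := j.isLt
  rw [chordedPath_adj, Set.mem_ofPred_eq, Set.mem_ofPred_eq, ← Fin.val_ne_iff]
  simp only [symmCompanion, companionOfRow, Matrix.add_apply, Matrix.transpose_apply,
    Matrix.of_apply]
  by_cases hi' : (i : ℕ) + 1 < n <;> by_cases hj' : (j : ℕ) + 1 < n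
  · split_ifs <;> norm_num <;> omega
  · rcases hr i with h | h <;> split_ifs <;> simp [h] <;> omega
  · rcases hr j with h | h <;> split_ifs <;> simp [h] <;> omega
  · have hij : i = j := Fin.ext (by omega)
    subst hij
    simp [hi', hlast i (by omega)]

end Companion

section Lollipop

variable {n : ℕ}

/-- The extremal last row; the free entry `e ∈ {0, 1}` makes `a_{n,n-1} = 1 + e`. -/
def lollipopRow (n : ℕ) (e : ℝ) : Fin n → ℝ :=
  fun j => if (j : ℕ) + 3 = n then 1 else if (j : ℕ) + 2 = n then e else 0

theorem lollipopRow_eq_zero_or_one {e : ℝ} (he : e = 0 ∨ e = 1) (j : Fin n) :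
    lollipopRow n e j = 0 ∨ lollipopRow n e j = 1 := by
  unfold lollipopRow
  split_ifs <;> simp [he]

theorem lollipopRow_of_ne (e : ℝ) {j : Fin n} (h3 : (j : ℕ) + 3 ≠ n) (h2 : (j : ℕ) + 2 ≠ n) :
    lollipopRow n e j = 0 := by
  simp [lollipopRow, h3, h2]

theorem lollipopRow_of_add_two (e : ℝ) {j : Fin n} (h2 : (j : ℕ) + 2 = n) :
    lollipopRow n e j = e := by
  simp [lollipopRow, h2, show (j : ℕ) + 3 ≠ n by omega]

theorem isLollipopChordSet_lollipopRow (e : ℝ) :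
    IsLollipopChordSet n {j | lollipopRow n e j = 1} := fun j hj => by
  simp only [Set.mem_ofPred_eq, lollipopRow, show (j : ℕ) + 2 ≠ n by omega, if_false]
  split_ifs <;> simpa

theorem IsLollipopChordSet.eq_lollipopRow {r : Fin n → ℝ}
    (hS : IsLollipopChordSet n {j | r j = 1}) (hr : ∀ j, r j = 0 ∨ r j = 1)
    (hlast : ∀ l : Fin n, (l : ℕ) + 1 = n → r l = 0) {m : Fin n} (hm : (m : ℕ) + 2 = n) :
    r = lollipopRow n (r m) := by
  funext j
  have := j.isLt
  simp only [lollipopRow]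
  split_ifs with h3 h2
  · exact (hS j (by omega)).2 h3
  · rw [show j = m from Fin.ext (by omega)]
  · by_cases hj : (j : ℕ) + 2 < n
    · exact (hr j).resolve_right fun h => h3 ((hS j hj).1 h)
    · exact hlast j (by omega)

theorem symmCompanion_maxExp_iff (hn : 4 ≤ n) {r : Fin n → ℝ} (hr : ∀ j, r j = 0 ∨ r j = 1)
    (hr0 : ∀ j : Fin n, (j : ℕ) = 0 → r j = 0) (hlast : ∀ l : Fin n, (l : ℕ) + 1 = n → r l = 0) :
    IsPrimitive (symmCompanion r) ∧ ExpIs (symmCompanion r) (2 * (n - 2)) ↔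
      IsLollipopChordSet n {j | r j = 1} := by
  have hA := symmCompanion_nonneg hr
  have hset := Matrix.setOf_pow_pos_eq_fullWalkLengths hA (symmCompanion_pos_iff hr hlast)
  rw [ExpIs, hset]
  refine ⟨fun h => isLollipopChordSet_of_isLeast_fullWalkLengths hn (fun j hj hj0 => ?_) h.2,
    fun hS => ?_⟩
  · rw [Set.mem_ofPred_eq, hr0 j hj0] at hj
    exact zero_ne_one hj
  · have h := hS.isLeast_fullWalkLengths hn
    exact ⟨⟨hA, _, hset ▸ h.1⟩, h⟩

theorem symmCompanion_lollipopRow_mem (hn : 4 ≤ n) {h0 : 0 < n} {e : ℝ} (he : e = 0 ∨ e = 1) :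
    symmCompanion (lollipopRow n e) ∈ companionClass n h0 0 0 ∧
      IsPrimitive (symmCompanion (lollipopRow n e)) ∧
      ExpIs (symmCompanion (lollipopRow n e)) (2 * (n - 2)) := by
  have hr0 : ∀ j : Fin n, (j : ℕ) = 0 → lollipopRow n e j = 0 :=
    fun j hj => lollipopRow_of_ne e (by omega) (by omega)
  have hlast : ∀ l : Fin n, (l : ℕ) + 1 = n → lollipopRow n e l = 0 :=
    fun l hl => lollipopRow_of_ne e (by omega) (by omega)
  exact ⟨(mem_companionClass_iff _ _ _).2 ⟨_, lollipopRow_eq_zero_or_one he, hr0, hlast, rfl⟩,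
    (symmCompanion_maxExp_iff hn (lollipopRow_eq_zero_or_one he) hr0 hlast).2
      (isLollipopChordSet_lollipopRow e)⟩

end Lollipop

/-- For `n ≥ 4`, exactly 2 matrices in `PSC_n^{0,0}` attain the maximum
exponent `2(n-2)`. -/
theorem card_PSC_zero_zero_max_exp {n : ℕ} (hn : 4 ≤ n) :
    Set.ncard {A ∈ companionClass n (by omega) 0 0 |
      IsPrimitive A ∧ ExpIs A (2 * (n - 2))} = 2 := by
  have hm : ((⟨n - 2, by omega⟩ : Fin n) : ℕ) + 2 = n := by simp only; omega
  suffices h : {A ∈ companionClass n (by omega) 0 0 | IsPrimitive A ∧ ExpIs A (2 * (n - 2))} =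
      {symmCompanion (lollipopRow n 0), symmCompanion (lollipopRow n 1)} by
    refine h ▸ Set.ncard_pair (symmCompanion_injective.ne fun h01 => ?_)
    simpa [lollipopRow_of_add_two _ hm] using congrFun h01 ⟨n - 2, by omega⟩
  ext A
  refine ⟨fun ⟨hA, hexp⟩ => ?_, ?_⟩
  · obtain ⟨r, hr, hr0, hlast, rfl⟩ := (mem_companionClass_iff _ _ _).1 hA
    have hS := (symmCompanion_maxExp_iff hn hr hr0 hlast).1 hexp
    rw [hS.eq_lollipopRow hr hlast hm]
    rcases hr ⟨n - 2, by omega⟩ with h | h <;> simp [h]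
  · rintro (rfl | rfl)
    exacts [symmCompanion_lollipopRow_mem hn (Or.inl rfl),
      symmCompanion_lollipopRow_mem hn (Or.inr rfl)]
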